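/- arXiv:2503.17571 — 2 statements merged into one kernel-verified Lean document; each statement's English description precedes it below -/
import Mathlib

section
/- For every positive integer L, the following identity of formal power series in q and z holds: ∑_{n,m ≥ 0} a₂(L,m,n)·z^m·qⁿ = (1 + q + z·q²/(1−q)) · ∏_{k=2}^{L} ( 1 + z·q^{2k−1} + z²·q^{2(2k−1)}/(1 − q^{2k−1}) ). -/
/-!
Statement 8: For every positive integer `L`, as formal power series in the two variables
`q` and `z` over `ℚ`,
`∑_{n,m ≥ 0} a₂(L,m,n) z^m qⁿ
   = (1 + q + z q²/(1−q)) ∏_{k=2}^{L} (1 + z q^{2k−1} + z² q^{2(2k−1)}/(1−q^{2k−1}))`,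
where `a₂(L,m,n)` is the number of partitions of `n` into odd parts with largest part at
most `2L−1` having exactly `m` cells of hook length 2.  The identity is stated
coefficientwise: the coefficient of `z^m qⁿ` of the right-hand side equals `a₂(L,m,n)`.
-/

/-- `λ'_j`: the number of parts of `π` that are at least `j` (the conjugate partition). -/
def conjPart (π : Multiset ℕ) (j : ℕ) : ℕ := (π.filter (fun p => j ≤ p)).card

/-- `λ_i`: the `i`-th largest part of `π` (1-indexed). -/
def rowPart (π : Multiset ℕ) (i : ℕ) : ℕ :=
  ((Finset.Icc 1 π.sum).filter (fun j => i ≤ conjPart π j)).card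

/-- The number of cells of hook length `t` in the Young diagram of `π`:
cells `(i,j)` with `1 ≤ i`, `1 ≤ j ≤ λ_i` and `λ_i + λ'_j − i − j + 1 = t`. -/
def hookCount (π : Multiset ℕ) (t : ℕ) : ℕ :=
  (((Finset.Icc 1 π.sum) ×ˢ (Finset.Icc 1 π.sum)).filter
    (fun c => c.2 ≤ rowPart π c.1 ∧ rowPart π c.1 + conjPart π c.2 + 1 = t + c.1 + c.2)).card

/-- `a₂(L,m,n)`: the number of partitions of `n` into odd parts with largest part at most
`2L−1` having exactly `m` cells of hook length 2. -/
def a2Lmn (L m n : ℕ) : ℕ :=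
  ((Nat.Partition.odds n).filter
    (fun π => (∀ p ∈ π.parts, p ≤ 2 * L - 1) ∧ hookCount π.parts 2 = m)).card

/-- The variable `q` in `ℚ⟦q,z⟧`. -/
noncomputable def qv : MvPowerSeries (Fin 2) ℚ := MvPowerSeries.X 0

/-- The variable `z` in `ℚ⟦q,z⟧`. -/
noncomputable def zv : MvPowerSeries (Fin 2) ℚ := MvPowerSeries.X 1

/-!
In the Young diagram of a partition, a cell of hook length 2 is either the last cell but one of
the last row of length `d`, where `d ≥ 2` and `d - 1` is not a part, or the last cell of the last
row but one of length `d`, where `d` is a repeated part. When all parts are odd, `d - 1` is never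
a part, so a part `d` of multiplicity `a > 0` contributes `[d ≥ 3] + [a ≥ 2]` such cells,
independently of the other parts. The generating function therefore factors over the parts
`d = 2k - 1 ≤ 2L - 1`, the factor of `d` being `∑_a z^(#cells) q^(d a)`, which is
`1 + q + z q²/(1 - q)` for `d = 1` and `1 + z q^d + z² q^(2d)/(1 - q^d)` for `d ≥ 3`.
-/

open Finset

lemma le_card_filter_Icc_iff {p : ℕ → Prop} [DecidablePred p] (hp : ∀ a b, a ≤ b → p b → p a)
    {N j : ℕ} (hj : 1 ≤ j) (hjN : p j → j ≤ N) : j ≤ #{x ∈ Icc 1 N | p x} ↔ p j := by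
  refine ⟨fun h => ?_, fun h => ?_⟩
  · by_contra hpj
    have hsub : {x ∈ Icc 1 N | p x} ⊆ Icc 1 (j - 1) := fun x hx => by
      simp only [mem_filter, mem_Icc] at hx ⊢
      exact ⟨hx.1.1, by by_contra hlt; exact hpj (hp j x (by omega) hx.2)⟩
    have := card_le_card hsub
    simp only [Nat.card_Icc] at this
    omega
  · have hsub : Icc 1 j ⊆ {x ∈ Icc 1 N | p x} := fun x hx => by
      simp only [mem_filter, mem_Icc] at hx ⊢
      exact ⟨⟨hx.1, hx.2.trans (hjN h)⟩, hp x j hx.2 h⟩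
    simpa using card_le_card hsub

section YoungDiagram

variable (P : Multiset ℕ)

lemma conjPart_eq_count_add (j : ℕ) : conjPart P j = P.count j + conjPart P (j + 1) := by
  induction P using Multiset.induction_on with
  | empty => simp [conjPart]
  | cons a s ih =>
    simp only [conjPart, Multiset.filter_cons, Multiset.card_add, Multiset.count_cons] at *
    split_ifs <;> simp_all <;> omega

lemma count_le_conjPart (j : ℕ) : P.count j ≤ conjPart P j :=
  (conjPart_eq_count_add P j).ge.trans' le_self_add

lemma conjPart_antitone : Antitone (conjPart P) := fun _ _ h =>
  Multiset.card_le_card (Multiset.monotone_filter_right _ fun _ hp => h.trans hp)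

lemma conjPart_le_sum {j : ℕ} (hj : 1 ≤ j) : conjPart P j ≤ P.sum := by
  have hcard : conjPart P j ≤ (P.filter (j ≤ ·)).sum := by
    simpa [conjPart] using Multiset.card_nsmul_le_sum (s := P.filter (j ≤ ·)) (a := 1)
      fun p hp => hj.trans (Multiset.of_mem_filter hp)
  refine hcard.trans ?_
  conv_rhs => rw [← Multiset.filter_add_not (j ≤ ·) P, Multiset.sum_add]
  exact le_self_add

lemma le_sum_of_conjPart_pos {j : ℕ} (h : 0 < conjPart P j) : j ≤ P.sum := by
  obtain ⟨p, hp⟩ := Multiset.card_pos_iff_exists_mem.1 h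
  exact (Multiset.of_mem_filter hp).trans (Multiset.le_sum_of_mem (Multiset.mem_of_mem_filter hp))

lemma le_rowPart_iff {i j : ℕ} (hi : 1 ≤ i) (hj : 1 ≤ j) :
    j ≤ rowPart P i ↔ i ≤ conjPart P j :=
  le_card_filter_Icc_iff (fun _ _ hab h => h.trans (conjPart_antitone P hab)) hj
    fun h => le_sum_of_conjPart_pos P (by omega)

lemma hook_eq_two_iff {i j : ℕ} (hi : 1 ≤ i) (hj : 1 ≤ j) :
    (j ≤ rowPart P i ∧ rowPart P i + conjPart P j + 1 = 2 + i + j) ↔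
      (j + 1 ∈ P ∧ j ∉ P ∧ i = conjPart P (j + 1)) ∨ (2 ≤ P.count j ∧ i + 1 = conjPart P j) := by
  have r0 := le_rowPart_iff P hi hj
  have r1 := le_rowPart_iff P hi (j := j + 1) (by omega)
  have r2 := le_rowPart_iff P hi (j := j + 1 + 1) (by omega)
  have c0 := conjPart_eq_count_add P j
  have c1 := conjPart_eq_count_add P (j + 1)
  -- (arm, leg) is (1, 0) or (0, 1); comparing `λ_i` with `j`, `j + 1`, `j + 2` decides which
  rw [← Multiset.count_pos, ← Multiset.count_eq_zero]
  omega

end YoungDiagram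

lemma filter_hook_eq_two_eq_union {n : ℕ} (π : n.Partition) :
    {c ∈ Icc 1 π.parts.sum ×ˢ Icc 1 π.parts.sum | c.2 ≤ rowPart π.parts c.1 ∧
        rowPart π.parts c.1 + conjPart π.parts c.2 + 1 = 2 + c.1 + c.2}
      = {d ∈ π.parts.toFinset | 2 ≤ d ∧ d - 1 ∉ π.parts}.image
          (fun d => (conjPart π.parts d, d - 1))
        ∪ {d ∈ π.parts.toFinset | 2 ≤ π.parts.count d}.image
          (fun d => (conjPart π.parts d - 1, d)) := by
  set P := π.parts
  ext ⟨i, j⟩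
  simp only [mem_filter, mem_product, mem_Icc, mem_union, mem_image, Multiset.mem_toFinset,
    Prod.mk.injEq]
  constructor
  · rintro ⟨⟨⟨hi, -⟩, hj, -⟩, hcell⟩
    rcases (hook_eq_two_iff P hi hj).1 hcell with ⟨hmem, hnot, rfl⟩ | ⟨hcount, hi'⟩
    · exact Or.inl ⟨j + 1, ⟨hmem, by omega, by simpa using hnot⟩, rfl, by simp⟩
    · exact Or.inr ⟨j, ⟨Multiset.count_pos.1 (by omega), hcount⟩, by omega, rfl⟩
  · rintro (⟨d, ⟨hd, h2, hd1⟩, rfl, rfl⟩ | ⟨d, ⟨hd, h2⟩, rfl, rfl⟩)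
    · have hcount := Multiset.count_pos.2 hd
      have := count_le_conjPart P d
      have := conjPart_le_sum P (j := d) (by omega)
      have := Multiset.le_sum_of_mem hd
      have e : d - 1 + 1 = d := by omega
      refine ⟨⟨⟨by omega, by omega⟩, by omega, by omega⟩,
        (hook_eq_two_iff P (by omega) (by omega)).2 (Or.inl ⟨?_, hd1, ?_⟩)⟩ <;> rw [e]
      exact hd
    · have := count_le_conjPart P d
      have hdpos := π.parts_pos hd
      have := conjPart_le_sum P (j := d) hdpos
      have := Multiset.le_sum_of_mem hd
      exact ⟨⟨⟨by omega, by omega⟩, hdpos, this⟩,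
        (hook_eq_two_iff P (by omega) hdpos).2 (Or.inr ⟨h2, by omega⟩)⟩

theorem hookCount_two_eq {n : ℕ} (π : n.Partition) :
    hookCount π.parts 2 = #{d ∈ π.parts.toFinset | 2 ≤ d ∧ d - 1 ∉ π.parts}
      + #{d ∈ π.parts.toFinset | 2 ≤ π.parts.count d} := by
  rw [hookCount, filter_hook_eq_two_eq_union, card_union_of_disjoint, card_image_of_injOn,
    card_image_of_injOn]
  · exact fun _ _ _ _ h => congrArg Prod.snd h
  · intro a ha b hb h
    simp only [coe_filter, Set.mem_ofPred_eq] at ha hb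
    have := congrArg Prod.snd h
    simp only at this
    omega
  · rw [disjoint_left]
    rintro _ hx hy
    simp only [mem_image, mem_filter, Multiset.mem_toFinset] at hx hy
    obtain ⟨d, ⟨-, -, hd1⟩, rfl⟩ := hx
    obtain ⟨d', ⟨hd', -⟩, h⟩ := hy
    rw [Prod.mk.injEq] at h
    exact hd1 (h.2 ▸ hd')

/-- The number of cells of hook length 2 contributed by a part `d` of multiplicity `a`, when
`d - 1` is not a part. -/
def hookTwoWeight (d a : ℕ) : ℕ := (if 2 ≤ d ∧ a ≠ 0 then 1 else 0) + if 2 ≤ a then 1 else 0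

theorem hookCount_two_eq_sum_of_odd {n : ℕ} (π : n.Partition) (hodd : ∀ p ∈ π.parts, Odd p)
    {D : Finset ℕ} (hD : π.parts.toFinset ⊆ D) :
    hookCount π.parts 2 = ∑ d ∈ D, hookTwoWeight d (π.parts.count d) := by
  rw [hookCount_two_eq, card_filter, card_filter, ← sum_add_distrib]
  refine (sum_congr rfl fun d hd => ?_).trans (sum_subset hD fun d _ hd => ?_)
  · rw [Multiset.mem_toFinset] at hd
    have hd1 : d - 1 ∉ π.parts := fun h => by
      have := Nat.odd_iff.1 (hodd _ h)
      have := Nat.odd_iff.1 (hodd _ hd)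
      have := π.parts_pos hd
      omega
    have := Multiset.count_pos.2 hd
    simp only [hookTwoWeight, hd1, not_false_eq_true, and_true]
    split_ifs <;> omega
  · simp [hookTwoWeight, Multiset.count_eq_zero.2 (by simpa using hd)]

section PartSeries

open MvPowerSeries

/-- `partSeries d e = ∑_{a ≥ 0} z^(e a) q^(d a)`, the factor recording a part `d` of
multiplicity `a` with weight `z^(e a)`. -/
noncomputable def partSeries (d : ℕ) (e : ℕ → ℕ) : MvPowerSeries (Fin 2) ℚ :=
  fun s => if d ∣ s 0 ∧ s 1 = e (s 0 / d) then 1 else 0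

lemma coeff_partSeries (d : ℕ) (e : ℕ → ℕ) (s : Fin 2 →₀ ℕ) :
    coeff s (partSeries d e) = if d ∣ s 0 ∧ s 1 = e (s 0 / d) then 1 else 0 :=
  rfl

lemma partSeries_eq_add_mul {d : ℕ} (hd : 0 < d) (e : ℕ → ℕ) :
    partSeries d e = zv ^ e 0 + qv ^ d * partSeries d (fun a => e (a + 1)) := by
  ext s
  rw [map_add, zv, qv, coeff_X_pow, X_pow_eq, coeff_monomial_mul, coeff_partSeries,
    coeff_partSeries]
  simp only [Finsupp.ext_iff, Fin.forall_fin_two, Finsupp.single_le_iff, Finsupp.tsub_apply,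
    Finsupp.single_apply, Fin.zero_eq_one_iff, if_true, one_mul]
  rcases Nat.lt_or_ge (s 0) d with hlt | hle
  · rcases Nat.eq_zero_or_pos (s 0) with h0 | h0
    · simp [h0, hd.ne']
    · simp [Nat.not_dvd_of_pos_of_lt h0 hlt, h0.ne', hlt]
  · obtain ⟨y, hy⟩ := Nat.exists_eq_add_of_le hle
    have hdiv : (d + y) / d = y / d + 1 := by rw [add_comm, Nat.add_div_right _ hd]
    simp [hy, hdiv, hd.ne', Nat.dvd_add_self_left]

lemma partSeries_const {d : ℕ} (hd : 0 < d) (c : ℕ) :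
    partSeries d (fun _ => c) = zv ^ c * (1 - qv ^ d)⁻¹ := by
  have hunit : constantCoeff (1 - qv ^ d) ≠ 0 := by simp [qv, hd.ne']
  rw [MvPowerSeries.eq_mul_inv_iff_mul_eq hunit]
  linear_combination partSeries_eq_add_mul hd (fun _ => c)

lemma partSeries_min_two {d : ℕ} (hd : 0 < d) :
    partSeries d (fun a => min a 2)
      = 1 + zv * qv ^ d + zv ^ 2 * qv ^ (2 * d) * (1 - qv ^ d)⁻¹ := by
  rw [partSeries_eq_add_mul hd, partSeries_eq_add_mul hd,
    show (fun a => min (a + 1 + 1) 2) = fun _ => 2 from funext fun a => by omega,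
    partSeries_const hd]
  simp only [show min 0 2 = 0 from rfl, show min 1 2 = 1 from rfl, pow_zero, pow_one]
  ring

lemma partSeries_one_two_le :
    partSeries 1 (fun a => if 2 ≤ a then 1 else 0) = 1 + qv + zv * qv ^ 2 * (1 - qv)⁻¹ := by
  rw [partSeries_eq_add_mul one_pos, partSeries_eq_add_mul one_pos,
    show (fun a => if 2 ≤ a + 1 + 1 then 1 else 0) = fun _ => 1 from funext fun a => by simp,
    partSeries_const one_pos]
  simp only [show (if 2 ≤ 0 then 1 else 0) = 0 from rfl, show (if 2 ≤ 1 then 1 else 0) = 0 from rfl,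
    pow_zero, pow_one]
  ring

lemma coeff_prod_partSeries (D : Finset ℕ) (e : ℕ → ℕ → ℕ) (s : Fin 2 →₀ ℕ) :
    coeff s (∏ d ∈ D, partSeries d (e d))
      = #{l ∈ D.finsuppAntidiag s | ∀ d ∈ D, d ∣ l d 0 ∧ l d 1 = e d (l d 0 / d)} := by
  simp only [coeff_prod, coeff_partSeries, prod_boole, sum_boole]

end PartSeries

section Multiplicities

variable {D : Finset ℕ}

noncomputable def multisetOfMults (D : Finset ℕ) (a : ℕ → ℕ) : Multiset ℕ :=
  Finsupp.toMultiset (Finsupp.indicator D fun d _ => a d)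

lemma count_multisetOfMults {d : ℕ} (hd : d ∈ D) (a : ℕ → ℕ) :
    (multisetOfMults D a).count d = a d := by
  rw [multisetOfMults, Finsupp.count_toMultiset, Finsupp.indicator_of_mem hd]

lemma count_multisetOfMults_of_notMem {d : ℕ} (hd : d ∉ D) (a : ℕ → ℕ) :
    (multisetOfMults D a).count d = 0 := by
  rw [multisetOfMults, Finsupp.count_toMultiset, Finsupp.indicator_of_notMem hd]

lemma mem_of_mem_multisetOfMults {a : ℕ → ℕ} {p : ℕ} (hp : p ∈ multisetOfMults D a) : p ∈ D :=
  by_contra fun hpD => by simp [← Multiset.count_pos, count_multisetOfMults_of_notMem hpD] at hp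

lemma sum_multisetOfMults (a : ℕ → ℕ) : (multisetOfMults D a).sum = ∑ d ∈ D, a d * d := by
  rw [multisetOfMults, Finsupp.sum_toMultiset, Finsupp.sum_of_support_subset _
    (Finsupp.support_indicator_subset _ _) (fun d k => k • d) fun _ _ => zero_nsmul _]
  exact sum_congr rfl fun d hd => by rw [Finsupp.indicator_of_mem hd, smul_eq_mul]

/-- The exponents `(d a, e d a)` of `q` and `z` contributed by each `d ∈ D` of multiplicity `a`
in `P`. -/
noncomputable def multVector (D : Finset ℕ) (e : ℕ → ℕ → ℕ) (P : Multiset ℕ) :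
    ℕ →₀ (Fin 2 →₀ ℕ) :=
  Finsupp.indicator D fun d _ =>
    Finsupp.single 0 (d * P.count d) + Finsupp.single 1 (e d (P.count d))

lemma multVector_apply {d : ℕ} (hd : d ∈ D) (e : ℕ → ℕ → ℕ) (P : Multiset ℕ) :
    multVector D e P d = Finsupp.single 0 (d * P.count d) + Finsupp.single 1 (e d (P.count d)) :=
  Finsupp.indicator_of_mem hd _

lemma multVector_mem_finsuppAntidiag (e : ℕ → ℕ → ℕ) {P : Multiset ℕ} (hP : ∀ p ∈ P, p ∈ D) :
    multVector D e P ∈ D.finsuppAntidiag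
      (Finsupp.single 0 P.sum + Finsupp.single 1 (∑ d ∈ D, e d (P.count d))) := by
  rw [mem_finsuppAntidiag, sum_congr rfl fun d hd => multVector_apply hd e P, sum_add_distrib,
    ← Finsupp.single_finsetSum, ← Finsupp.single_finsetSum,
    sum_multiset_count_of_subset P D fun p hp => hP p (Multiset.mem_toFinset.1 hp)]
  refine ⟨?_, Finsupp.support_indicator_subset _ _⟩
  simp_rw [smul_eq_mul, mul_comm]

lemma multisetOfMults_multVector (hD : 0 ∉ D) (e : ℕ → ℕ → ℕ) {P : Multiset ℕ}
    (hP : ∀ p ∈ P, p ∈ D) : multisetOfMults D (fun d => multVector D e P d 0 / d) = P := by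
  ext d
  by_cases hd : d ∈ D
  · have hd0 : d ≠ 0 := fun h => hD (h ▸ hd)
    simp [count_multisetOfMults hd, multVector_apply hd, hd0]
  · rw [count_multisetOfMults_of_notMem hd, eq_comm, Multiset.count_eq_zero]
    exact fun h => hd (hP d h)

lemma multVector_multisetOfMults (e : ℕ → ℕ → ℕ) {l : ℕ →₀ (Fin 2 →₀ ℕ)} (hl : l.support ⊆ D)
    (hle : ∀ d ∈ D, d ∣ l d 0 ∧ l d 1 = e d (l d 0 / d)) :
    multVector D e (multisetOfMults D fun d => l d 0 / d) = l := by
  ext d : 1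
  by_cases hd : d ∈ D
  · rw [multVector_apply hd, count_multisetOfMults hd, Nat.mul_div_cancel' (hle d hd).1,
      ← (hle d hd).2]
    ext i
    fin_cases i <;> simp
  · rw [multVector, Finsupp.indicator_of_notMem hd, eq_comm, ← Finsupp.notMem_support_iff]
    exact fun h => hd (hl h)

theorem card_partitions_eq_card_finsuppAntidiag (hD : 0 ∉ D) (e : ℕ → ℕ → ℕ) (n m : ℕ) :
    #{π : n.Partition | (∀ p ∈ π.parts, p ∈ D) ∧ ∑ d ∈ D, e d (π.parts.count d) = m}
      = #((D.finsuppAntidiag (Finsupp.single 0 n + Finsupp.single 1 m : Fin 2 →₀ ℕ)).filter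
          fun l => ∀ d ∈ D, d ∣ l d 0 ∧ l d 1 = e d (l d 0 / d)) := by
  have hpos : ∀ {d}, d ∈ D → 0 < d := fun hd => Nat.pos_of_ne_zero fun h => hD (h ▸ hd)
  refine card_bij' (fun π _ => multVector D e π.parts)
    (fun l hl => ⟨multisetOfMults D fun d => l d 0 / d,
      fun hp => hpos (mem_of_mem_multisetOfMults hp), ?_⟩) ?_ ?_ ?_ ?_
  · obtain ⟨⟨hsum, -⟩, hdvd⟩ := by simpa only [mem_filter, mem_finsuppAntidiag] using hl
    rw [sum_multisetOfMults, sum_congr rfl fun d hd => Nat.div_mul_cancel (hdvd d hd).1,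
      ← Finsupp.finsetSum_apply, hsum]
    simp
  · intro π hπ
    obtain ⟨hD', rfl⟩ := by simpa only [mem_filter, mem_univ, true_and] using hπ
    have hmem := multVector_mem_finsuppAntidiag e hD'
    rw [π.parts_sum] at hmem
    refine mem_filter.2 ⟨hmem, fun d hd => ?_⟩
    simp [multVector_apply hd, Nat.mul_div_cancel_left _ (hpos hd)]
  · intro l hl
    obtain ⟨⟨hsum, -⟩, hdvd⟩ := by simpa only [mem_filter, mem_finsuppAntidiag] using hl
    refine mem_filter.2 ⟨mem_univ _, fun p hp => mem_of_mem_multisetOfMults hp, ?_⟩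
    calc ∑ d ∈ D, e d ((multisetOfMults D fun d => l d 0 / d).count d)
        = ∑ d ∈ D, l d 1 := sum_congr rfl fun d hd => by
          rw [count_multisetOfMults hd, (hdvd d hd).2]
      _ = m := by rw [← Finsupp.finsetSum_apply, hsum]; simp
  · intro π hπ
    obtain ⟨hD', -⟩ := by simpa only [mem_filter, mem_univ, true_and] using hπ
    exact Nat.Partition.ext (multisetOfMults_multVector hD e hD')
  · intro l hl
    obtain ⟨⟨-, hsupp⟩, hle⟩ := by simpa only [mem_filter, mem_finsuppAntidiag] using hl
    exact multVector_multisetOfMults e hsupp hle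

end Multiplicities

def oddParts (L : ℕ) : Finset ℕ := (Icc 1 L).image fun k => 2 * k - 1

lemma mem_oddParts {L d : ℕ} : d ∈ oddParts L ↔ Odd d ∧ d ≤ 2 * L - 1 := by
  simp only [oddParts, mem_image, mem_Icc, Nat.odd_iff]
  exact ⟨by omega, fun h => ⟨(d + 1) / 2, by omega⟩⟩

lemma zero_notMem_oddParts (L : ℕ) : 0 ∉ oddParts L := by
  simp [mem_oddParts]

lemma hookTwoWeight_one : hookTwoWeight 1 = fun a => if 2 ≤ a then 1 else 0 := by
  funext a
  simp [hookTwoWeight]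

lemma hookTwoWeight_of_two_le {d : ℕ} (hd : 2 ≤ d) : hookTwoWeight d = fun a => min a 2 := by
  funext a
  simp only [hookTwoWeight, hd, true_and]
  split_ifs <;> omega

lemma a2Lmn_eq_card (L m n : ℕ) :
    a2Lmn L m n = #{π : n.Partition | (∀ p ∈ π.parts, p ∈ oddParts L) ∧
      ∑ d ∈ oddParts L, hookTwoWeight d (π.parts.count d) = m} := by
  rw [a2Lmn]
  congr 1
  ext π
  simp only [Nat.Partition.odds, Nat.Partition.restricted, mem_filter, mem_univ, true_and,
    Nat.not_even_iff_odd, mem_oddParts]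
  constructor
  · rintro ⟨hodd, hle, rfl⟩
    refine ⟨fun p hp => ⟨hodd p hp, hle p hp⟩, (hookCount_two_eq_sum_of_odd π hodd ?_).symm⟩
    exact fun p hp => mem_oddParts.2 ⟨hodd p (Multiset.mem_toFinset.1 hp),
      hle p (Multiset.mem_toFinset.1 hp)⟩
  · rintro ⟨hD, rfl⟩
    exact ⟨fun p hp => (hD p hp).1, fun p hp => (hD p hp).2, hookCount_two_eq_sum_of_odd π
      (fun p hp => (hD p hp).1) fun p hp => mem_oddParts.2 (hD p (Multiset.mem_toFinset.1 hp))⟩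

lemma prod_factors_eq_prod_partSeries {L : ℕ} (hL : 0 < L) :
    (1 + qv + zv * qv ^ 2 * (1 - qv)⁻¹) *
        ∏ k ∈ Icc 2 L,
          (1 + zv * qv ^ (2 * k - 1) + zv ^ 2 * qv ^ (2 * (2 * k - 1)) * (1 - qv ^ (2 * k - 1))⁻¹)
      = ∏ d ∈ oddParts L, partSeries d (hookTwoWeight d) := by
  rw [oddParts, prod_image fun a ha b hb h => by simp only [coe_Icc, Set.mem_Icc] at ha hb; omega,
    ← insert_Icc_add_one_left_eq_Icc (a := 1) hL, prod_insert (by simp), hookTwoWeight_one,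
    partSeries_one_two_le]
  refine congrArg _ (prod_congr rfl fun k hk => ?_)
  rw [hookTwoWeight_of_two_le (by simp at hk; omega), partSeries_min_two (by simp at hk; omega)]

theorem a2L_bivariate_gen_fun (L : ℕ) (hL : 0 < L) (n m : ℕ) :
    MvPowerSeries.coeff (σ := Fin 2) (R := ℚ) (Finsupp.single 0 n + Finsupp.single 1 m)
      ((1 + qv + zv * qv ^ 2 * (1 - qv)⁻¹) *
        ∏ k ∈ Finset.Icc 2 L,
          (1 + zv * qv ^ (2 * k - 1) + zv ^ 2 * qv ^ (2 * (2 * k - 1)) * (1 - qv ^ (2 * k - 1))⁻¹))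
      = (a2Lmn L m n : ℚ) := by
  rw [prod_factors_eq_prod_partSeries hL, coeff_prod_partSeries,
    ← card_partitions_eq_card_finsuppAntidiag (zero_notMem_oddParts L), a2Lmn_eq_card]
end

section
/- The following identity of formal power series in q holds: ∑_{n ≥ 0} b₃(n)·qⁿ = ∏_{k=1}^{∞}(1+q^k) · ∑_{m ≥ 2} q^m/(1+q^m) − (q²/(1−q²)) · ∏_{k=3}^{∞}(1+q^k). -/
/-- `b₃(n)`: the total number of cells of hook length 3 summed over all partitions of `n`
into distinct parts. -/
def b3 (n : ℕ) : ℕ :=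
  ∑ π ∈ Nat.Partition.distincts n, hookCount π.parts 3

/-- The infinite product `∏_{k=a}^{∞}(1 + q^k)`, defined coefficientwise: the `n`-th
coefficient of the partial product `∏_{k=a}^{a+n}(1 + q^k)` is already stable. -/
noncomputable def prodOnePlusFrom (a : ℕ) : PowerSeries ℚ :=
  PowerSeries.mk fun n =>
    PowerSeries.coeff n
      (∏ k ∈ Finset.Icc a (a + n), (1 + (PowerSeries.X : PowerSeries ℚ) ^ k))

/-- The infinite sum `∑_{m ≥ 2} q^m/(1+q^m)`, defined coefficientwise: the `n`-th
coefficient of the partial sum over `2 ≤ m ≤ n + 1` is already stable. -/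
noncomputable def lambertSum : PowerSeries ℚ :=
  PowerSeries.mk fun n =>
    PowerSeries.coeff n
      (∑ m ∈ Finset.Icc 2 (n + 1),
        (PowerSeries.X : PowerSeries ℚ) ^ m * (1 + (PowerSeries.X : PowerSeries ℚ) ^ m)⁻¹)


/-!
In a partition into distinct parts, the row of a part `m` contains exactly one cell of hook
length 3 when `m - 1` is also a part (in column `m - 1`), exactly one when `m ≥ 3` and neither
`m - 1` nor `m - 2` is a part (in column `m - 2`), and none otherwise. Viewing partitions into
distinct parts as finite sets of positive integers, the sets containing `m` have generating
function `q^m ∏_{k ≠ m} (1 + q^k) = (−q;q)_∞ q^m/(1 + q^m)`, and those of the two kinds above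
are obtained by prescribing the membership of `m - 1` and `m - 2`. What remains, the sets
containing `m` but not `m - 1` and, if `m ≥ 3`, containing `m - 2`, has generating function
`q^{2m-2} ∏_{k ∉ {m-2, m-1, m}} (1 + q^k)`, and `(1 − q²)` times the sum of these over `m ≥ 2`
telescopes to `q² (−q³;q)_∞`. All identities are proved for the products truncated to parts
`≤ n + 2`, which determine the coefficient of `q^n`.
-/

open Finset PowerSeries

theorem sum_powerset_filter_prod {α R : Type*} [DecidableEq α] [CommSemiring R] (x : α → R)
    {U A B : Finset α} (hA : A ⊆ U) (hAB : Disjoint A B) :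
    ∑ t ∈ U.powerset with A ⊆ t ∧ Disjoint B t, ∏ k ∈ t, x k =
      (∏ k ∈ A, x k) * ∏ k ∈ U \ (A ∪ B), (1 + x k) := by
  have hfree : ∀ t ∈ (U \ (A ∪ B)).powerset, Disjoint A t ∧ Disjoint B t := fun t ht =>
    ⟨disjoint_sdiff.mono subset_union_left (mem_powerset.1 ht),
      disjoint_sdiff.mono subset_union_right (mem_powerset.1 ht)⟩
  rw [prod_one_add, mul_sum]
  symm
  refine sum_nbij' (A ∪ ·) (· \ A) (fun t ht => ?_) (fun t ht => ?_) (fun t ht => ?_)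
    (fun t ht => ?_) (fun t ht => ?_)
  · simp only [mem_filter, mem_powerset] at ht ⊢
    exact ⟨union_subset hA (ht.trans sdiff_subset), subset_union_left,
      disjoint_union_right.2 ⟨hAB.symm, (hfree t (mem_powerset.2 ht)).2⟩⟩
  · simp only [mem_filter, mem_powerset] at ht ⊢
    intro k hk
    obtain ⟨hkt, hkA⟩ := mem_sdiff.1 hk
    exact mem_sdiff.2 ⟨ht.1 hkt, by simpa [hkA] using disjoint_left.1 ht.2.2.symm hkt⟩
  · exact union_sdiff_cancel_left (hfree t ht).1
  · exact union_sdiff_of_subset (mem_filter.1 ht).2.1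
  · exact (prod_union (hfree t ht).1).symm

theorem sum_powerset_card_filter_mul {α R : Type*} [DecidableEq α] [CommSemiring R]
    (U : Finset α) (P : α → Finset α → Prop) [∀ a t, Decidable (P a t)] (f : Finset α → R) :
    ∑ t ∈ U.powerset, (#{a ∈ t | P a t} : R) * f t =
      ∑ a ∈ U, ∑ t ∈ U.powerset with a ∈ t ∧ P a t, f t := by
  simp_rw [card_eq_sum_ones, Nat.cast_sum, Nat.cast_one, sum_mul, one_mul]
  refine sum_comm' fun t a => ?_
  simp only [mem_powerset, mem_filter]
  exact ⟨fun ⟨h, ha, hp⟩ => ⟨⟨h, ha, hp⟩, h ha⟩, fun ⟨⟨h, ha, hp⟩, _⟩ => ⟨h, ha, hp⟩⟩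

theorem coeff_sum_powerset_mul_prod_X_pow {R : Type*} [CommSemiring R] (U : Finset ℕ)
    (w : Finset ℕ → ℕ) (n : ℕ) :
    coeff n (∑ t ∈ U.powerset, (w t : R⟦X⟧) * ∏ k ∈ t, X ^ k) =
      ∑ t ∈ U.powerset with ∑ k ∈ t, k = n, (w t : R) := by
  rw [map_sum, sum_filter]
  refine sum_congr rfl fun t _ => ?_
  rw [prod_pow_eq_pow_sum, ← map_natCast (C (R := R)), coeff_C_mul_X_pow]
  exact if_congr eq_comm rfl rfl

theorem prod_sdiff_eq_mul_prod_sdiff_insert {α M : Type*} [DecidableEq α] [CommMonoid M]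
    (f : α → M) {U S : Finset α} {a : α} (ha : a ∈ U) (haS : a ∉ S) :
    ∏ k ∈ U \ S, f k = f a * ∏ k ∈ U \ insert a S, f k := by
  rw [sdiff_insert, mul_prod_erase _ _ (mem_sdiff.2 ⟨ha, haS⟩)]

section Truncation

variable {R : Type*} [CommRing R]

theorem mk_span_X_pow_eq_iff {N : ℕ} {f g : R⟦X⟧} :
    Ideal.Quotient.mk (Ideal.span {X ^ N}) f = Ideal.Quotient.mk (Ideal.span {X ^ N}) g ↔
      ∀ i < N, coeff i f = coeff i g := by
  simp only [Ideal.Quotient.eq, Ideal.mem_span_singleton, X_pow_dvd_iff, map_sub, sub_eq_zero]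

theorem mk_span_X_pow_X_pow {N k : ℕ} (hk : N ≤ k) :
    Ideal.Quotient.mk (Ideal.span {X ^ N}) (X ^ k : R⟦X⟧) = 0 :=
  Ideal.Quotient.eq_zero_iff_mem.2 (Ideal.mem_span_singleton.2 (pow_dvd_pow X hk))

theorem mk_prod_one_add_X_pow (N : ℕ) (S : Finset ℕ) :
    Ideal.Quotient.mk (Ideal.span {X ^ N}) (∏ k ∈ S, (1 + X ^ k : R⟦X⟧)) =
      Ideal.Quotient.mk (Ideal.span {X ^ N}) (∏ k ∈ S with k < N, (1 + X ^ k)) := by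
  have hlarge : Ideal.Quotient.mk (Ideal.span {X ^ N})
      (∏ k ∈ S with ¬k < N, (1 + X ^ k : R⟦X⟧)) = 1 := by
    rw [map_prod]
    exact prod_eq_one fun k hk => by
      rw [map_add, map_one, mk_span_X_pow_X_pow (not_lt.1 (mem_filter.1 hk).2), add_zero]
  rw [← prod_filter_mul_prod_filter_not S (· < N), map_mul, hlarge, mul_one]

theorem mk_sum_X_pow_mul (N : ℕ) (S : Finset ℕ) (f : ℕ → R⟦X⟧) :
    Ideal.Quotient.mk (Ideal.span {X ^ N}) (∑ m ∈ S, X ^ m * f m) =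
      Ideal.Quotient.mk (Ideal.span {X ^ N}) (∑ m ∈ S with m < N, X ^ m * f m) := by
  have hlarge : Ideal.Quotient.mk (Ideal.span {X ^ N}) (∑ m ∈ S with ¬m < N, X ^ m * f m) = 0 := by
    rw [map_sum]
    exact sum_eq_zero fun m hm => by
      rw [map_mul, mk_span_X_pow_X_pow (not_lt.1 (mem_filter.1 hm).2), zero_mul]
  rw [← sum_filter_add_sum_filter_not S (· < N), map_add, hlarge, add_zero]

end Truncation

section DistinctParts

variable {s : Finset ℕ} {m : ℕ}

theorem conjPart_val (s : Finset ℕ) (j : ℕ) : conjPart s.val j = #{p ∈ s | j ≤ p} := by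
  rw [conjPart, ← filter_val, card_val]

theorem conjPart_antitone_s16 (π : Multiset ℕ) : Antitone (conjPart π) := fun _ _ h =>
  Multiset.card_le_card (Multiset.monotone_filter_right π fun _ hx => h.trans hx)

theorem conjPart_val_le_card (s : Finset ℕ) (j : ℕ) : conjPart s.val j ≤ #s := by
  rw [conjPart_val]
  exact card_filter_le _ _

theorem one_le_conjPart_val (hm : m ∈ s) : 1 ≤ conjPart s.val m := by
  rw [conjPart_val]
  exact card_pos.2 ⟨m, mem_filter.2 ⟨hm, le_rfl⟩⟩

theorem conjPart_val_lt_of_mem_of_lt {j : ℕ} (hm : m ∈ s) (hmj : m < j) :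
    conjPart s.val j < conjPart s.val m := by
  rw [conjPart_val, conjPart_val]
  refine card_lt_card ⟨monotone_filter_right _ fun p _ hp => hmj.le.trans hp, fun h => ?_⟩
  have := (mem_filter.1 (h (mem_filter.2 ⟨hm, le_rfl⟩))).2
  omega

theorem conjPart_val_eq_add (s : Finset ℕ) (j : ℕ) :
    conjPart s.val j = conjPart s.val (j + 1) + if j ∈ s then 1 else 0 := by
  rw [conjPart_val, conjPart_val, ← card_filter_add_card_filter_not (j + 1 ≤ ·), filter_filter,
    filter_filter]
  have hnot : {p ∈ s | j ≤ p ∧ ¬j + 1 ≤ p} = {p ∈ s | p = j} := filter_congr fun p _ => by omega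
  rw [hnot, filter_eq', filter_congr fun p _ => (by omega : j ≤ p ∧ j + 1 ≤ p ↔ j + 1 ≤ p)]
  split_ifs <;> rfl

theorem card_le_sum_val (h0 : 0 ∉ s) : #s ≤ s.val.sum := by
  rw [sum_val]
  simpa using card_nsmul_le_sum s id 1 fun x hx =>
    Nat.one_le_iff_ne_zero.2 (ne_of_mem_of_not_mem hx h0)

theorem rowPart_conjPart_val (hm : m ∈ s) : rowPart s.val (conjPart s.val m) = m := by
  have hrow : {j ∈ Icc 1 s.val.sum | conjPart s.val m ≤ conjPart s.val j} = Icc 1 m := by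
    ext j
    simp only [mem_filter, mem_Icc]
    constructor
    · rintro ⟨⟨hj, -⟩, hc⟩
      exact ⟨hj, not_lt.1 fun hmj => (conjPart_val_lt_of_mem_of_lt hm hmj).not_ge hc⟩
    · rintro ⟨hj, hjm⟩
      exact ⟨⟨hj, hjm.trans (Multiset.le_sum_of_mem hm)⟩, conjPart_antitone_s16 _ hjm⟩
  rw [rowPart, hrow, Nat.card_Icc, Nat.add_sub_cancel]

theorem image_conjPart_val (s : Finset ℕ) : s.image (conjPart s.val) = Icc 1 #s := by
  refine eq_of_subset_of_card_le (image_subset_iff.2 fun m hm =>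
    mem_Icc.2 ⟨one_le_conjPart_val hm, conjPart_val_le_card s m⟩) ?_
  rw [Nat.card_Icc, Nat.add_sub_cancel, card_image_of_injOn]
  intro m hm m' hm' h
  by_contra hne
  rcases lt_or_gt_of_ne hne with hlt | hlt
  · exact (conjPart_val_lt_of_mem_of_lt hm hlt).ne' h
  · exact (conjPart_val_lt_of_mem_of_lt hm' hlt).ne h

theorem exists_conjPart_val_eq {i : ℕ} (hi : 1 ≤ i) (hrow : 0 < rowPart s.val i) :
    ∃ m ∈ s, conjPart s.val m = i := by
  obtain ⟨j, hj⟩ := card_pos.1 hrow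
  have hmem : i ∈ s.image (conjPart s.val) := by
    rw [image_conjPart_val]
    exact mem_Icc.2 ⟨hi, (mem_filter.1 hj).2.trans (conjPart_val_le_card s j)⟩
  simpa using hmem

theorem hookCount_val (h0 : 0 ∉ s) (t : ℕ) :
    hookCount s.val t = ∑ m ∈ s,
      #{j ∈ Icc 1 m | m + conjPart s.val j + 1 = t + conjPart s.val m + j} := by
  rw [← card_sigma, hookCount]
  -- the part `m` fills row `conjPart s.val m`, and every nonempty row arises this way
  refine (card_nbij' (fun c => (conjPart s.val c.1, c.2)) (fun c => ⟨rowPart s.val c.1, c.2⟩)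
    ?_ ?_ ?_ ?_).symm
  · rintro ⟨m, j⟩ h
    simp only [coe_sigma, Set.mem_sigma_iff, mem_coe, mem_filter, mem_Icc] at h
    obtain ⟨hm, ⟨hj1, hjm⟩, heq⟩ := h
    have := Multiset.le_sum_of_mem hm
    have := card_le_sum_val h0
    have := conjPart_val_le_card s m
    have := one_le_conjPart_val hm
    simp only [coe_filter, Set.mem_ofPred_eq, mem_product, mem_Icc, rowPart_conjPart_val hm]
    omega
  · rintro ⟨i, j⟩ h
    simp only [coe_filter, Set.mem_ofPred_eq, mem_product, mem_Icc] at h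
    obtain ⟨⟨⟨hi1, -⟩, hj1, -⟩, hjr, heq⟩ := h
    obtain ⟨m, hm, rfl⟩ := exists_conjPart_val_eq (s := s) hi1 (by omega)
    rw [rowPart_conjPart_val hm] at hjr heq
    simp only [coe_sigma, Set.mem_sigma_iff, mem_coe, mem_filter, mem_Icc, rowPart_conjPart_val hm]
    exact ⟨hm, ⟨hj1, hjr⟩, heq⟩
  · rintro ⟨m, j⟩ h
    simp only [coe_sigma, Set.mem_sigma_iff, mem_coe] at h
    simp [rowPart_conjPart_val h.1]
  · rintro ⟨i, j⟩ h
    simp only [coe_filter, Set.mem_ofPred_eq, mem_product, mem_Icc] at h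
    obtain ⟨m, hm, rfl⟩ := exists_conjPart_val_eq (s := s) h.1.1.1 (by omega)
    simp [rowPart_conjPart_val hm]

theorem row_hook_eq_three_iff {j : ℕ} (hj : j ∈ Icc 1 m) :
    m + conjPart s.val j + 1 = 3 + conjPart s.val m + j ↔
      j = m - 1 ∧ m - 1 ∈ s ∨ j = m - 2 ∧ 3 ≤ m ∧ m - 1 ∉ s ∧ m - 2 ∉ s := by
  obtain ⟨hj1, hjm⟩ := mem_Icc.1 hj
  have hstep1 := conjPart_val_eq_add s (m - 1)
  rw [Nat.sub_add_cancel (by omega)] at hstep1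
  rcases (by omega : j = m ∨ j = m - 1 ∨ j = m - 2 ∨ j + 2 < m) with rfl | rfl | rfl | hj
  · omega
  · by_cases h1 : m - 1 ∈ s <;> simp only [h1, if_true, if_false] at hstep1 <;> simp [h1] <;> omega
  · have hstep2 := conjPart_val_eq_add s (m - 2)
    rw [show m - 2 + 1 = m - 1 by omega] at hstep2
    by_cases h1 : m - 1 ∈ s <;> by_cases h2 : m - 2 ∈ s <;>
      simp only [h1, h2, if_true, if_false] at hstep1 hstep2 <;> simp [h1, h2] <;> omega
  · have := conjPart_antitone_s16 s.val hjm
    omega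

theorem card_row_hook_eq_three (h0 : 0 ∉ s) :
    #{j ∈ Icc 1 m | m + conjPart s.val j + 1 = 3 + conjPart s.val m + j} =
      (if m - 1 ∈ s then 1 else 0) + if 3 ≤ m ∧ m - 1 ∉ s ∧ m - 2 ∉ s then 1 else 0 := by
  rw [filter_congr fun j hj => row_hook_eq_three_iff hj]
  by_cases h1 : m - 1 ∈ s
  · have hm2 : 2 ≤ m := by
      by_contra
      exact h0 (by rwa [show m - 1 = 0 by omega] at h1)
    rw [if_pos h1, if_neg (by tauto), card_eq_one]
    exact ⟨m - 1, by ext j; simp [h1]; omega⟩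
  by_cases h2 : 3 ≤ m ∧ m - 2 ∉ s
  · rw [if_neg h1, if_pos ⟨h2.1, h1, h2.2⟩, card_eq_one]
    exact ⟨m - 2, by ext j; simp [h1, h2]; omega⟩
  · rw [if_neg h1, if_neg (by tauto), card_eq_zero, filter_eq_empty_iff]
    intro j _
    simp only [h1]
    tauto

theorem hookCount_val_three (h0 : 0 ∉ s) :
    hookCount s.val 3 = #{m ∈ s | m - 1 ∈ s} + #{m ∈ s | 3 ≤ m ∧ m - 1 ∉ s ∧ m - 2 ∉ s} := by
  rw [hookCount_val h0, sum_congr rfl fun _ _ => card_row_hook_eq_three h0, sum_add_distrib,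
    sum_boole, sum_boole, Nat.cast_id, Nat.cast_id]

end DistinctParts

theorem sum_distincts_eq_sum_powerset {M : Type*} [AddCommMonoid M] (f : Multiset ℕ → M)
    {n K : ℕ} (hK : n ≤ K) :
    ∑ p ∈ Nat.Partition.distincts n, f p.parts =
      ∑ s ∈ (Icc 1 K).powerset with ∑ k ∈ s, k = n, f s.val := by
  have hnodup : ∀ p ∈ Nat.Partition.distincts n, p.parts.Nodup := fun p hp =>
    (mem_filter.1 hp).2
  refine sum_bij (fun p hp => ⟨p.parts, hnodup p hp⟩) (fun p hp => ?_) (fun p hp q hq h => ?_)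
    (fun s hs => ?_) fun _ _ => rfl
  · refine mem_filter.2 ⟨mem_powerset.2 fun k hk => mem_Icc.2 ⟨p.parts_pos hk, ?_⟩, ?_⟩
    · exact (Multiset.le_sum_of_mem hk).trans (p.parts_sum.le.trans hK)
    · exact (sum_val _).symm.trans p.parts_sum
  · exact Nat.Partition.ext (congrArg Finset.val h)
  · obtain ⟨hsub, hsum⟩ := mem_filter.1 hs
    refine ⟨⟨s.val, fun hk => (mem_Icc.1 (mem_powerset.1 hsub hk)).1, ?_⟩, ?_, rfl⟩
    · rw [sum_val]
      exact hsum
    · exact mem_filter.2 ⟨mem_univ _, s.nodup⟩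

noncomputable def distinctPartsGF (S : Finset ℕ) : ℚ⟦X⟧ := ∏ k ∈ S, (1 + X ^ k)

theorem distinctPartsGF_sdiff_eq_mul {U S : Finset ℕ} {a : ℕ} (ha : a ∈ U) (haS : a ∉ S) :
    distinctPartsGF (U \ S) = (1 + X ^ a) * distinctPartsGF (U \ insert a S) :=
  prod_sdiff_eq_mul_prod_sdiff_insert _ ha haS

theorem distinctPartsGF_mul_X_pow_mul_inv {U : Finset ℕ} {m : ℕ} (hm : m ∈ U) (hm0 : 0 < m) :
    distinctPartsGF U * (X ^ m * (1 + X ^ m)⁻¹) = X ^ m * distinctPartsGF (U \ {m}) := by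
  have hsplit := distinctPartsGF_sdiff_eq_mul (S := ∅) hm (notMem_empty m)
  rw [sdiff_empty, insert_empty] at hsplit
  have hunit : (1 + X ^ m : ℚ⟦X⟧) * (1 + X ^ m)⁻¹ = 1 :=
    PowerSeries.mul_inv_cancel _ (by simp [hm0.ne'])
  rw [hsplit]
  linear_combination X ^ m * distinctPartsGF (U \ {m}) * hunit

theorem sum_powerset_Icc_hookCount_three (K : ℕ) :
    ∑ t ∈ (Icc 1 K).powerset, (hookCount t.val 3 : ℚ⟦X⟧) * ∏ k ∈ t, X ^ k =
      ∑ m ∈ Icc 2 K, X ^ (m - 1) * X ^ m * distinctPartsGF (Icc 1 K \ {m - 1, m}) +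
        ∑ m ∈ Icc 3 K, X ^ m * distinctPartsGF (Icc 1 K \ {m, m - 2, m - 1}) := by
  have h0 : ∀ t ∈ (Icc 1 K).powerset, 0 ∉ t := fun t ht h => by
    simpa using mem_powerset.1 ht h
  rw [sum_congr rfl fun t ht => by rw [hookCount_val_three (h0 t ht), Nat.cast_add, add_mul],
    sum_add_distrib, sum_powerset_card_filter_mul, sum_powerset_card_filter_mul]
  congr 1
  · refine (sum_subset (Icc_subset_Icc_left one_le_two) fun m hm hm2 => ?_).symm.trans
      (sum_congr rfl fun m hm => ?_)
    · obtain rfl : m = 1 := by simp only [mem_Icc] at hm hm2; omega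
      exact sum_eq_zero fun t ht => absurd (mem_filter.1 ht).2.2 (h0 t (mem_filter.1 ht).1)
    · have hm := mem_Icc.1 hm
      rw [filter_congr fun t _ => (by simp [insert_subset_iff, and_comm] :
          m ∈ t ∧ m - 1 ∈ t ↔ {m - 1, m} ⊆ t ∧ Disjoint ∅ t),
        sum_powerset_filter_prod _ (by intro k; simp; omega) (disjoint_empty_right _),
        prod_pair (by omega), union_empty]
      rfl
  · refine (sum_subset (Icc_subset_Icc_left (by norm_num)) fun m hm hm3 => ?_).symm.trans
      (sum_congr rfl fun m hm => ?_)
    · have : ¬3 ≤ m := by simp only [mem_Icc] at hm hm3; omega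
      exact sum_eq_zero fun t ht => absurd (mem_filter.1 ht).2.2.1 this
    · have hm := mem_Icc.1 hm
      rw [filter_congr fun t _ => (by simp [hm.1, disjoint_insert_left]; tauto :
          m ∈ t ∧ 3 ≤ m ∧ m - 1 ∉ t ∧ m - 2 ∉ t ↔ {m} ⊆ t ∧ Disjoint {m - 2, m - 1} t),
        sum_powerset_filter_prod _ (by simp; omega) (by simp; omega),
        prod_singleton, singleton_union]
      rfl

theorem distinctPartsGF_telescoping_step {U : Finset ℕ} {m : ℕ} (hm : 2 ≤ m)
    (hU : Icc (m - 2) m ⊆ U) :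
    (1 - X ^ 2) * (X ^ m * distinctPartsGF (U \ {m})
        - X ^ (m - 1) * X ^ m * distinctPartsGF (U \ {m - 1, m})
        - X ^ m * distinctPartsGF (U \ {m, m - 2, m - 1})) =
      X ^ (2 * (m - 1)) * distinctPartsGF (U \ {m - 2, m - 1})
        - X ^ (2 * m) * distinctPartsGF (U \ {m - 1, m}) := by
  obtain ⟨a, rfl⟩ : ∃ a, m = a + 2 := ⟨m - 2, by omega⟩
  have hmem : ∀ i ≤ 2, a + i ∈ U := fun i hi => hU (mem_Icc.2 (by omega))
  simp only [show a + 2 - 1 = a + 1 by omega, Nat.add_sub_cancel]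
  have hperm : ({a + 2, a, a + 1} : Finset ℕ) = {a, a + 1, a + 2} := by
    ext; simp only [mem_insert, mem_singleton]; omega
  have h2 : distinctPartsGF (U \ {a + 1, a + 2}) =
      (1 + X ^ a) * distinctPartsGF (U \ {a, a + 1, a + 2}) :=
    distinctPartsGF_sdiff_eq_mul (hmem 0 (by norm_num)) (by simp)
  have h1 : distinctPartsGF (U \ {a + 2}) =
      (1 + X ^ (a + 1)) * (1 + X ^ a) * distinctPartsGF (U \ {a, a + 1, a + 2}) := by
    rw [distinctPartsGF_sdiff_eq_mul (hmem 1 (by norm_num)) (by simp), h2, mul_assoc]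
  have h3 : distinctPartsGF (U \ {a, a + 1}) =
      (1 + X ^ (a + 2)) * distinctPartsGF (U \ {a, a + 1, a + 2}) := by
    rw [distinctPartsGF_sdiff_eq_mul (hmem 2 le_rfl) (by simp), hperm]
  rw [h1, h2, h3, hperm]
  ring

theorem distinctPartsGF_telescoping_sum {U : Finset ℕ} {M : ℕ} (hM : 2 ≤ M) (hU : Icc 1 M ⊆ U) :
    (1 - X ^ 2) * (∑ m ∈ Icc 2 M, (X ^ m * distinctPartsGF (U \ {m})
          - X ^ (m - 1) * X ^ m * distinctPartsGF (U \ {m - 1, m}))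
        - ∑ m ∈ Icc 3 M, X ^ m * distinctPartsGF (U \ {m, m - 2, m - 1})) =
      X ^ 2 * distinctPartsGF (U \ {1, 2}) - X ^ (2 * M) * distinctPartsGF (U \ {M - 1, M}) := by
  induction M, hM using Nat.le_induction with
  | base =>
    rw [Icc_self, sum_singleton, Icc_eq_empty (by norm_num), sum_empty,
      distinctPartsGF_sdiff_eq_mul (a := 1) (hU (by simp)) (by simp)]
    ring
  | succ M hM ih =>
    rw [sum_Icc_succ_top (by omega), sum_Icc_succ_top (by omega)]
    have hstep := distinctPartsGF_telescoping_step (m := M + 1) (by omega)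
      ((Icc_subset_Icc (by omega) le_rfl).trans hU)
    simp only [Nat.add_sub_cancel, show M + 1 - 2 = M - 1 by omega] at hstep ⊢
    linear_combination ih ((Icc_subset_Icc le_rfl (by omega)).trans hU) + hstep

theorem truncated_identity {K : ℕ} (hK : 2 ≤ K) :
    distinctPartsGF (Icc 1 K) * ∑ m ∈ Icc 2 K, X ^ m * (1 + X ^ m)⁻¹
        - X ^ 2 * (1 - X ^ 2)⁻¹ * distinctPartsGF (Icc 3 K) =
      ∑ t ∈ (Icc 1 K).powerset, (hookCount t.val 3 : ℚ⟦X⟧) * ∏ k ∈ t, X ^ k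
        - X ^ (2 * K) * ((1 - X ^ 2)⁻¹ * distinctPartsGF (Icc 1 K \ {K - 1, K})) := by
  have hlambert : distinctPartsGF (Icc 1 K) * ∑ m ∈ Icc 2 K, X ^ m * (1 + X ^ m)⁻¹ =
      ∑ m ∈ Icc 2 K, X ^ m * distinctPartsGF (Icc 1 K \ {m}) := by
    rw [mul_sum]
    refine sum_congr rfl fun m hm => distinctPartsGF_mul_X_pow_mul_inv ?_ ?_ <;>
      simp only [mem_Icc] at hm ⊢ <;> omega
  have htail : Icc 1 K \ {1, 2} = Icc 3 K := by
    ext k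
    simp only [mem_sdiff, mem_Icc, mem_insert, mem_singleton]
    omega
  have hdiff := congrArg ((1 - X ^ 2)⁻¹ * ·) (distinctPartsGF_telescoping_sum hK subset_rfl)
  rw [← mul_assoc, PowerSeries.inv_mul_cancel _ (by simp), one_mul, sum_sub_distrib, htail]
    at hdiff
  rw [hlambert, sum_powerset_Icc_hookCount_three]
  linear_combination hdiff

theorem mk_prodOnePlusFrom (a : ℕ) {N K : ℕ} (hN : N ≤ K + 1) :
    Ideal.Quotient.mk (Ideal.span {X ^ N}) (prodOnePlusFrom a) =
      Ideal.Quotient.mk (Ideal.span {X ^ N}) (distinctPartsGF (Icc a K)) := by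
  refine mk_span_X_pow_eq_iff.2 fun i hi => ?_
  rw [prodOnePlusFrom, coeff_mk]
  refine mk_span_X_pow_eq_iff.1 ?_ i (lt_add_one i)
  rw [distinctPartsGF, mk_prod_one_add_X_pow, mk_prod_one_add_X_pow (i + 1) (Icc a K)]
  congr 2
  ext k
  simp only [mem_filter, mem_Icc]
  omega

theorem mk_lambertSum {N K : ℕ} (hN : N ≤ K + 1) :
    Ideal.Quotient.mk (Ideal.span {X ^ N}) lambertSum =
      Ideal.Quotient.mk (Ideal.span {X ^ N}) (∑ m ∈ Icc 2 K, X ^ m * (1 + X ^ m)⁻¹) := by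
  refine mk_span_X_pow_eq_iff.2 fun i hi => ?_
  rw [lambertSum, coeff_mk]
  refine mk_span_X_pow_eq_iff.1 ?_ i (lt_add_one i)
  rw [mk_sum_X_pow_mul, mk_sum_X_pow_mul (i + 1) (Icc 2 K)]
  congr 2
  ext k
  simp only [mem_filter, mem_Icc]
  omega

theorem mk_rhs_eq_truncation {N K : ℕ} (hN : N ≤ K + 1) :
    Ideal.Quotient.mk (Ideal.span {X ^ N})
        (prodOnePlusFrom 1 * lambertSum - X ^ 2 * (1 - X ^ 2)⁻¹ * prodOnePlusFrom 3) =
      Ideal.Quotient.mk (Ideal.span {X ^ N})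
        (distinctPartsGF (Icc 1 K) * ∑ m ∈ Icc 2 K, X ^ m * (1 + X ^ m)⁻¹
          - X ^ 2 * (1 - X ^ 2)⁻¹ * distinctPartsGF (Icc 3 K)) := by
  simp only [map_sub, map_mul, mk_prodOnePlusFrom _ hN, mk_lambertSum hN]

open PowerSeries in
theorem b3_gen_fun :
    PowerSeries.mk (fun n => (b3 n : ℚ)) =
      prodOnePlusFrom 1 * lambertSum
        - (X : ℚ⟦X⟧) ^ 2 * (1 - (X : ℚ⟦X⟧) ^ 2)⁻¹ * prodOnePlusFrom 3 := by
  ext n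
  have htrunc := mk_span_X_pow_eq_iff.1 (mk_rhs_eq_truncation (N := n + 1) (K := n + 2) (by omega))
  rw [coeff_mk, htrunc n (lt_add_one n),
    truncated_identity (by omega), map_sub, coeff_X_pow_mul', if_neg (by omega), sub_zero,
    coeff_sum_powerset_mul_prod_X_pow, b3, Nat.cast_sum,
    sum_distincts_eq_sum_powerset (fun π => (hookCount π 3 : ℚ)) (by omega : n ≤ n + 2)]
end
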